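/- Existence lemma for ¬∇: For every world s of the canonical model of SLKvr, every agent i, every formula ψ, and every constant symbol d, if ¬∇_i(ψ,d) ∈ Γ_s then there exist worlds t₁ and t₂ of the canonical model such that ψ ∈ Γ_{t₁}, ψ ∈ Γ_{t₂}, s R_i t₁, s R_i t₂, and f_{t₁}(d) ≠ f_{t₂}(d). -/

import Mathlib

/-!
Write `Θ = {χ : □_iχ ∈ Γ_s}`. All formulas `φ` of an MCS `Δ ⊇ Θ` with `∇_i(φ,d) ∈ Γ_s` are
pairwise `◇_i`-compatible at `s`, so NSVOR and condition (2) give them one `g_s`-value; putting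
that value at `d` makes `Δ` an `R_i`-successor of `s`. Hence it suffices that, for every `v`,
`Θ ∪ {ψ} ∪ {¬φ : ∇_i(φ,d) ∈ Γ_s, g_s(i,φ,d) = v}` is consistent: take `t₁` over `Θ ∪ {ψ}` with
value `v`, then `t₂` over this set, whose value is forced to differ from `v`. If the set were
inconsistent, `□_i(ψ → φ₁ ∨ … ∨ φₙ) ∈ Γ_s` for such `φₖ`; they share a value, so
`∇_i(φ₁ ∨ … ∨ φₙ, d) ∈ Γ_s` (NSVBOT if `n = 0`), and DISTNSV yields `∇_i(ψ,d) ∈ Γ_s`.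
-/

/-- Formulas of the language LKvr: ⊤, proposition letters, ¬, ∧, □_i, ∇_i(·,d).
Proposition letters, agents, and constant symbols are all drawn from ℕ
(countably infinite sets). -/
inductive Formula : Type
  | top : Formula
  | atom : ℕ → Formula
  | neg : Formula → Formula
  | and : Formula → Formula → Formula
  | box : ℕ → Formula → Formula
  | nabla : ℕ → Formula → ℕ → Formula
  deriving DecidableEq

namespace Formula

/-- ⊥ := ¬⊤ -/
def bot : Formula := neg top
/-- φ∨ψ := ¬(¬φ∧¬ψ) -/
def or (φ ψ : Formula) : Formula := neg (and (neg φ) (neg ψ))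
/-- φ→ψ := ¬(φ∧¬ψ) -/
def imp (φ ψ : Formula) : Formula := neg (and φ (neg ψ))
/-- ◇_iφ := ¬□_i¬φ -/
def dia (i : ℕ) (φ : Formula) : Formula := neg (box i (neg φ))
/-- φ↔ψ := (φ→ψ)∧(ψ→φ) -/
def iff (φ ψ : Formula) : Formula := and (imp φ ψ) (imp ψ φ)

/-- `subst ψ χ φ` is φ[ψ/χ]: the result of replacing every (outermost)
occurrence of ψ as a subformula of φ by χ. -/
def subst (ψ χ : Formula) : Formula → Formula
  | top => if top = ψ then χ else top
  | atom p => if atom p = ψ then χ else atom p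
  | neg α => if neg α = ψ then χ else neg (subst ψ χ α)
  | and α β => if and α β = ψ then χ else and (subst ψ χ α) (subst ψ χ β)
  | box i α => if box i α = ψ then χ else box i (subst ψ χ α)
  | nabla i α d => if nabla i α d = ψ then χ else nabla i (subst ψ χ α) d

end Formula

/-- φ is an instance of a propositional tautology: it is true under every
assignment of truth values that respects ⊤, ¬ and ∧. -/
def Taut (φ : Formula) : Prop :=
  ∀ v : Formula → Prop,
    v Formula.top →
    (∀ ψ, v (Formula.neg ψ) ↔ ¬ v ψ) →
    (∀ ψ χ, v (Formula.and ψ χ) ↔ (v ψ ∧ v χ)) →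
    v φ

/-- Derivability in the proof system SLKvr. -/
inductive Derivable : Formula → Prop
  | taut {φ : Formula} : Taut φ → Derivable φ
  | axK (i : ℕ) (φ ψ : Formula) :
      Derivable ((Formula.box i (φ.imp ψ)).imp ((Formula.box i φ).imp (Formula.box i ψ)))
  | distNsv (i : ℕ) (φ ψ : Formula) (d : ℕ) :
      Derivable ((Formula.box i (φ.imp ψ)).imp ((Formula.nabla i ψ d).imp (Formula.nabla i φ d)))
  | nsvBot (i d : ℕ) : Derivable (Formula.nabla i Formula.bot d)
  | nsvOr (i : ℕ) (φ ψ : Formula) (d : ℕ) :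
      Derivable ((((Formula.dia i (φ.and ψ)).and (Formula.nabla i φ d)).and
        (Formula.nabla i ψ d)).imp (Formula.nabla i (φ.or ψ) d))
  | mp {φ ψ : Formula} : Derivable (φ.imp ψ) → Derivable φ → Derivable ψ
  | nec {φ : Formula} (i : ℕ) : Derivable φ → Derivable (Formula.box i φ)
  | re {ψ χ : Formula} (φ : Formula) :
      Derivable (ψ.iff χ) → Derivable (φ.iff (Formula.subst ψ χ φ))

/-- A Kripke model with values: worlds W, values O, relations R_i,
propositional valuation V and value assignment VD. -/
structure Model where
  W : Type
  O : Type
  R : ℕ → W → W → Prop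
  V : ℕ → W → Prop
  VD : ℕ → W → O

/-- Membership in the class K of all models: the sets of worlds and of values
are nonempty. -/
def Model.inK (M : Model) : Prop := Nonempty M.W ∧ Nonempty M.O

/-- Satisfaction. -/
def Sat (M : Model) : M.W → Formula → Prop
  | _, Formula.top => True
  | s, Formula.atom p => M.V p s
  | s, Formula.neg φ => ¬ Sat M s φ
  | s, Formula.and φ ψ => Sat M s φ ∧ Sat M s ψ
  | s, Formula.box i φ => ∀ t, M.R i s t → Sat M t φ
  | s, Formula.nabla i φ d =>
      ∀ t₁ t₂, M.R i s t₁ → M.R i s t₂ → Sat M t₁ φ → Sat M t₂ φ →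
        M.VD d t₁ = M.VD d t₂

/-- Validity on the class K of all models. -/
def Valid (φ : Formula) : Prop := ∀ M : Model, M.inK → ∀ s : M.W, Sat M s φ

/-- Conjunction of a nonempty list of formulas (φ₁∧…∧φₙ). -/
def conj : List Formula → Formula
  | [] => Formula.top
  | [φ] => φ
  | φ :: ψ :: l => φ.and (conj (ψ :: l))

/-- Γ is consistent w.r.t. SLKvr: there is no finite subset {φ₁,…,φₙ} ⊆ Γ
(n ≥ 1) such that ¬(φ₁∧…∧φₙ) is derivable. -/
def Consistent (Γ : Set Formula) : Prop :=
  ¬ ∃ l : List Formula, l ≠ [] ∧ (∀ φ ∈ l, φ ∈ Γ) ∧ Derivable (Formula.neg (conj l))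

/-- Maximal consistent set: consistent, and every proper superset is
inconsistent. -/
def MCS (Γ : Set Formula) : Prop :=
  Consistent Γ ∧ ∀ Δ : Set Formula, Γ ⊂ Δ → ¬ Consistent Δ

/-- φ is derivable from Γ: there is a finite subset {ψ₁,…,ψₙ} ⊆ Γ with
(ψ₁∧…∧ψₙ)→φ derivable in SLKvr. -/
def DerivableFrom (Γ : Set Formula) (φ : Formula) : Prop :=
  ∃ l : List Formula, (∀ ψ ∈ l, ψ ∈ Γ) ∧ Derivable ((conj l).imp φ)

/-- A world of the canonical model of SLKvr: a triple ⟨Γ,f,g⟩ with Γ an MCS,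
f : D → ℕ, g : Ag×LKvr×D → ℕ∪{*} (with `none` playing the role of *)
satisfying conditions (1) and (2). -/
structure CWorld where
  Γ : Set Formula
  f : ℕ → ℕ
  g : ℕ → Formula → ℕ → Option ℕ
  mcs : MCS Γ
  cond1 : ∀ i φ d, g i φ d ≠ none ↔ (Formula.nabla i φ d).and (Formula.dia i φ) ∈ Γ
  cond2 : ∀ i φ ψ d, g i φ d ≠ none → g i ψ d ≠ none →
      (g i φ d = g i ψ d ↔ Formula.nabla i (φ.or ψ) d ∈ Γ)

/-- The canonical relation: s R_i t iff (3) {φ : □_iφ ∈ Γ_s} ⊆ Γ_t and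
(4) whenever ∇_i(φ,d) ∈ Γ_s and φ ∈ Γ_t, then f_t(d) = g_s(i,φ,d). -/
def CRel (i : ℕ) (s t : CWorld) : Prop :=
  (∀ φ, Formula.box i φ ∈ s.Γ → φ ∈ t.Γ) ∧
  (∀ φ d, Formula.nabla i φ d ∈ s.Γ → φ ∈ t.Γ → s.g i φ d = some (t.f d))

/-- The canonical model of SLKvr. -/
def CModel : Model where
  W := CWorld
  O := ℕ
  R := CRel
  V := fun p s => Formula.atom p ∈ s.Γ
  VD := fun d s => s.f d


namespace Formula

def disj : List Formula → Formula
  | [] => bot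
  | [φ] => φ
  | φ :: ψ :: l => φ.or (disj (ψ :: l))

def enc : Formula → ℕ
  | .top => Nat.pair 0 0
  | .atom p => Nat.pair 1 p
  | .neg φ => Nat.pair 2 φ.enc
  | .and φ ψ => Nat.pair 3 (Nat.pair φ.enc ψ.enc)
  | .box i φ => Nat.pair 4 (Nat.pair i φ.enc)
  | .nabla i φ d => Nat.pair 5 (Nat.pair i (Nat.pair φ.enc d))

theorem enc_injective : Function.Injective enc := by
  intro φ ψ h
  induction φ generalizing ψ <;> cases ψ <;> simp_all [enc, Nat.pair_eq_pair] <;> aesop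

end Formula

structure IsValuation (v : Formula → Prop) : Prop where
  top : v .top
  neg (φ : Formula) : v φ.neg ↔ ¬ v φ
  and (φ ψ : Formula) : v (φ.and ψ) ↔ v φ ∧ v ψ

namespace IsValuation

variable {v : Formula → Prop} (hv : IsValuation v)
include hv

theorem bot : ¬ v .bot := by simp [Formula.bot, hv.neg, hv.top]

theorem imp (φ ψ : Formula) : v (φ.imp ψ) ↔ (v φ → v ψ) := by
  simp only [Formula.imp, hv.neg, hv.and]; tauto

theorem or (φ ψ : Formula) : v (φ.or ψ) ↔ v φ ∨ v ψ := by
  simp only [Formula.or, hv.neg, hv.and]; tauto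

theorem conj : ∀ l : List Formula, v (_root_.conj l) ↔ ∀ φ ∈ l, v φ
  | [] => by simpa [_root_.conj] using hv.top
  | [φ] => by simp [_root_.conj]
  | φ :: ψ :: l => by simp [_root_.conj, hv.and, IsValuation.conj (ψ :: l)]

theorem disj : ∀ l : List Formula, v (Formula.disj l) ↔ ∃ φ ∈ l, v φ
  | [] => by simpa [Formula.disj] using hv.bot
  | [φ] => by simp [Formula.disj]
  | φ :: ψ :: l => by simp [Formula.disj, hv.or, IsValuation.disj (ψ :: l)]

end IsValuation

def trivialValuation : Formula → Prop
  | .top => True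
  | .atom _ => True
  | .neg φ => ¬ trivialValuation φ
  | .and φ ψ => trivialValuation φ ∧ trivialValuation ψ
  | .box _ _ => True
  | .nabla _ _ _ => True

theorem isValuation_trivialValuation : IsValuation trivialValuation :=
  ⟨by simp [trivialValuation], fun _ => by simp [trivialValuation],
    fun _ _ => by simp [trivialValuation]⟩

theorem trivialValuation_subst {ψ χ : Formula} (h : trivialValuation ψ ↔ trivialValuation χ)
    (φ : Formula) : trivialValuation (Formula.subst ψ χ φ) ↔ trivialValuation φ := by
  induction φ <;> simp only [Formula.subst] <;> split_ifs with hφ <;> subst_vars <;>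
    simp_all [trivialValuation]

namespace Derivable

theorem holds_trivialValuation {φ : Formula} (h : Derivable φ) : trivialValuation φ := by
  have hv := isValuation_trivialValuation
  induction h with
  | taut h => exact h _ hv.top hv.neg hv.and
  | mp _ _ ih₁ ih₂ => exact (hv.imp _ _).mp ih₁ ih₂
  | re φ _ ih =>
    simp only [Formula.iff, hv.and, hv.imp] at ih ⊢
    have := trivialValuation_subst ⟨ih.1, ih.2⟩ φ
    tauto
  | _ => simp [trivialValuation, hv.imp]

theorem not_neg_conj_of_forall_eq_top {l : List Formula} (hl : ∀ φ ∈ l, φ = .top) :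
    ¬ Derivable (conj l).neg := fun h => by
  have hv := isValuation_trivialValuation
  obtain ⟨φ, hφ, hnφ⟩ := by simpa [hv.neg, hv.conj] using h.holds_trivialValuation
  exact hnφ (hl φ hφ ▸ trivial)

theorem of_valuation {φ : Formula} (h : ∀ v, IsValuation v → v φ) : Derivable φ :=
  taut fun v hT hN hA => h v ⟨hT, hN, hA⟩


theorem box_mono {φ ψ : Formula} (i : ℕ) (h : Derivable (φ.imp ψ)) :
    Derivable ((Formula.box i φ).imp (Formula.box i ψ)) :=
  (axK i φ ψ).mp (nec i h)

theorem dia_mono {φ ψ : Formula} (i : ℕ) (h : Derivable (φ.imp ψ)) :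
    Derivable ((Formula.dia i φ).imp (Formula.dia i ψ)) := by
  have hcontra : Derivable (ψ.neg.imp φ.neg) :=
    (of_valuation fun v hv => by simp only [hv.imp, hv.neg]; tauto).mp h
  exact (of_valuation fun v hv => by simp only [Formula.dia, hv.imp, hv.neg]; tauto).mp
    (box_mono i hcontra)

theorem nabla_anti {φ ψ : Formula} (i d : ℕ) (h : Derivable (φ.imp ψ)) :
    Derivable ((Formula.nabla i ψ d).imp (Formula.nabla i φ d)) :=
  (distNsv i φ ψ d).mp (nec i h)

theorem conj_map_box_imp (i : ℕ) : ∀ l : List Formula,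
    Derivable ((conj (l.map (Formula.box i))).imp (Formula.box i (conj l)))
  | [] => (of_valuation fun v hv => by simp only [hv.imp]; tauto).mp
      (nec i (of_valuation fun v hv => hv.top))
  | [φ] => of_valuation fun v hv => by simp only [List.map, conj, hv.imp]; tauto
  | φ :: ψ :: l => by
    have hpair : Derivable (φ.imp ((conj (ψ :: l)).imp (conj (φ :: ψ :: l)))) :=
      of_valuation fun v hv => by simp only [conj, hv.imp, hv.and]; tauto
    refine (((of_valuation fun v hv => ?_).mp (conj_map_box_imp i (ψ :: l))).mp
      (box_mono i hpair)).mp (axK i (conj (ψ :: l)) (conj (φ :: ψ :: l)))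
    simp only [List.map, conj, hv.imp, hv.and]
    tauto

end Derivable

namespace DerivableFrom

variable {Γ : Set Formula}

theorem of_derivable {φ : Formula} (h : Derivable φ) : DerivableFrom Γ φ :=
  ⟨[], by simp, (Derivable.of_valuation fun v hv => by simp only [hv.imp]; tauto).mp h⟩

theorem of_mem {φ : Formula} (h : φ ∈ Γ) : DerivableFrom Γ φ :=
  ⟨[φ], by simpa using h, Derivable.of_valuation fun v hv => by simp [conj, hv.imp]⟩

theorem mp₂ {φ ψ χ : Formula} (hφ : DerivableFrom Γ φ) (hψ : DerivableFrom Γ ψ)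
    (h : Derivable (φ.imp (ψ.imp χ))) : DerivableFrom Γ χ := by
  obtain ⟨l, hl, hlφ⟩ := hφ
  obtain ⟨m, hm, hmψ⟩ := hψ
  refine ⟨l ++ m, by simpa [or_imp, forall_and] using ⟨hl, hm⟩, ?_⟩
  refine (((Derivable.of_valuation fun v hv => ?_).mp hlφ).mp hmψ).mp h
  simp only [hv.imp, hv.conj, List.mem_append]
  grind

theorem mp {φ ψ : Formula} (hφ : DerivableFrom Γ φ) (h : Derivable (φ.imp ψ)) :
    DerivableFrom Γ ψ :=
  hφ.mp₂ hφ ((Derivable.of_valuation fun v hv => by simp only [hv.imp]; tauto).mp h)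

theorem neg_of_not_consistent_insert {φ : Formula} (h : ¬ Consistent (insert φ Γ)) :
    DerivableFrom Γ φ.neg := by
  classical
  obtain ⟨l, -, hl, hd⟩ := not_not.mp h
  refine ⟨l.filter (· ≠ φ), fun ψ hψ => ?_, (Derivable.of_valuation fun v hv => ?_).mp hd⟩
  · obtain ⟨hψl, hψφ⟩ := List.mem_filter.mp hψ
    exact (hl ψ hψl).resolve_left (by simpa using hψφ)
  · simp only [hv.imp, hv.neg, hv.conj, List.mem_filter, decide_eq_true_eq]
    grind

theorem exists_or_disj_of_union_image_neg {S : Set Formula} {φ : Formula}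
    (h : DerivableFrom (Γ ∪ Formula.neg '' S) φ) :
    ∃ Φ : List Formula, (∀ ψ ∈ Φ, ψ ∈ S) ∧ DerivableFrom Γ (φ.or (Formula.disj Φ)) := by
  obtain ⟨l, hl, hd⟩ := h
  have hsplit : ∀ l : List Formula, (∀ χ ∈ l, χ ∈ Γ ∪ Formula.neg '' S) →
      ∃ lΓ Φ : List Formula, (∀ χ ∈ lΓ, χ ∈ Γ) ∧ (∀ ψ ∈ Φ, ψ ∈ S) ∧
        ∀ χ ∈ l, χ ∈ lΓ ∨ ∃ ψ ∈ Φ, ψ.neg = χ := by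
    intro l hl
    induction l with
    | nil => exact ⟨[], [], by simp, by simp, by simp⟩
    | cons χ l ih =>
      obtain ⟨lΓ, Φ, hlΓ, hΦ, hcover⟩ := ih fun χ' hχ' => hl χ' (List.mem_cons_of_mem _ hχ')
      rcases hl χ List.mem_cons_self with hχ | ⟨ψ, hψ, rfl⟩
      · exact ⟨χ :: lΓ, Φ, by simpa using ⟨hχ, hlΓ⟩, hΦ, by grind⟩
      · exact ⟨lΓ, ψ :: Φ, hlΓ, by simpa using ⟨hψ, hΦ⟩, by grind⟩
  obtain ⟨lΓ, Φ, hlΓ, hΦ, hcover⟩ := hsplit l hl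
  refine ⟨Φ, hΦ, lΓ, hlΓ, (Derivable.of_valuation fun v hv => ?_).mp hd⟩
  simp only [hv.imp, hv.or, hv.conj, hv.disj]
  intro hlφ hlΓv
  by_contra! hnot
  refine hnot.1 (hlφ fun χ hχ => ?_)
  rcases hcover χ hχ with hχ | ⟨ψ, hψ, rfl⟩
  exacts [hlΓv χ hχ, (hv.neg ψ).mpr (hnot.2 ψ hψ)]

end DerivableFrom

-- `Consistent` only constrains nonempty lists, so this rests on the consistency of `{⊤}`.
theorem MCS.nonempty {Γ : Set Formula} (hΓ : MCS Γ) : Γ.Nonempty := by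
  refine Set.nonempty_iff_ne_empty.mpr fun hΓe => hΓ.2 {.top} (hΓe ▸ by simp) ?_
  rintro ⟨l, -, hl, hd⟩
  exact Derivable.not_neg_conj_of_forall_eq_top hl hd

theorem Consistent.not_derivableFrom_bot {Γ : Set Formula} (hΓ : Consistent Γ)
    (hne : Γ.Nonempty) : ¬ DerivableFrom Γ .bot := by
  rintro ⟨l, hl, hd⟩
  obtain ⟨γ, hγ⟩ := hne
  refine hΓ ⟨γ :: l, by simp, by simpa using ⟨hγ, hl⟩, ?_⟩
  refine (Derivable.of_valuation fun v hv => ?_).mp hd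
  simp only [hv.imp, hv.neg, hv.conj, hv.bot, List.mem_cons]
  grind

theorem Consistent.mono {Γ Δ : Set Formula} (h : Consistent Δ) (hsub : Γ ⊆ Δ) :
    Consistent Γ := fun ⟨l, hne, hl, hd⟩ => h ⟨l, hne, fun φ hφ => hsub (hl φ hφ), hd⟩

theorem exists_mcs_superset {Γ : Set Formula} (h : Consistent Γ) : ∃ Δ, Γ ⊆ Δ ∧ MCS Δ := by
  have hbound : ∀ c ⊆ {Δ : Set Formula | Consistent Δ}, IsChain (· ⊆ ·) c → c.Nonempty →
      ∃ ub ∈ {Δ : Set Formula | Consistent Δ}, ∀ s ∈ c, s ⊆ ub := by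
    intro c hc hchain hne
    refine ⟨⋃₀ c, ?_, fun s hs => Set.subset_sUnion_of_mem hs⟩
    rintro ⟨l, hlne, hl, hd⟩
    obtain ⟨t, htc, hlt⟩ : ∃ t ∈ c, ↑l.toFinset ⊆ t :=
      hchain.directedOn.exists_mem_subset_of_finset_subset_biUnion hne
        (by simpa [Set.subset_def] using hl)
    exact hc htc ⟨l, hlne, fun φ hφ => hlt (by simpa using hφ), hd⟩
  obtain ⟨Δ, hΓΔ, hmax⟩ := zorn_subset_nonempty _ hbound Γ h
  exact ⟨Δ, hΓΔ, hmax.prop, fun Δ' hΔΔ' hΔ' => hΔΔ'.ne (hmax.eq_of_ge hΔ' hΔΔ'.subset).symm⟩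

namespace MCS

variable {Γ : Set Formula} (hΓ : MCS Γ)
include hΓ

theorem mem_of_derivableFrom {φ : Formula} (h : DerivableFrom Γ φ) : φ ∈ Γ := by
  by_contra hφ
  have hneg := DerivableFrom.neg_of_not_consistent_insert (hΓ.2 _ (Set.ssubset_insert hφ))
  refine hΓ.1.not_derivableFrom_bot hΓ.nonempty (h.mp₂ hneg ?_)
  exact Derivable.of_valuation fun v hv => by simp only [hv.imp, hv.neg, hv.bot]; tauto

theorem mem_of_derivable {φ : Formula} (h : Derivable φ) : φ ∈ Γ :=
  hΓ.mem_of_derivableFrom (.of_derivable h)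

theorem mem_of_imp {φ ψ : Formula} (hφ : φ ∈ Γ) (h : Derivable (φ.imp ψ)) : ψ ∈ Γ :=
  hΓ.mem_of_derivableFrom ((DerivableFrom.of_mem hφ).mp h)

theorem mem_of_imp₂ {φ ψ χ : Formula} (hφ : φ ∈ Γ) (hψ : ψ ∈ Γ)
    (h : Derivable (φ.imp (ψ.imp χ))) : χ ∈ Γ :=
  hΓ.mem_of_derivableFrom ((DerivableFrom.of_mem hφ).mp₂ (.of_mem hψ) h)

theorem neg_mem_iff {φ : Formula} : φ.neg ∈ Γ ↔ φ ∉ Γ := by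
  refine ⟨fun hneg hφ => hΓ.1.not_derivableFrom_bot hΓ.nonempty ?_, fun hφ => ?_⟩
  · refine (DerivableFrom.of_mem hφ).mp₂ (.of_mem hneg) ?_
    exact Derivable.of_valuation fun v hv => by simp only [hv.imp, hv.neg, hv.bot]; tauto
  · exact hΓ.mem_of_derivableFrom
      (DerivableFrom.neg_of_not_consistent_insert (hΓ.2 _ (Set.ssubset_insert hφ)))

theorem and_mem_iff {φ ψ : Formula} : φ.and ψ ∈ Γ ↔ φ ∈ Γ ∧ ψ ∈ Γ :=
  ⟨fun h => ⟨hΓ.mem_of_imp h (.of_valuation fun v hv => by simp only [hv.imp, hv.and]; tauto),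
      hΓ.mem_of_imp h (.of_valuation fun v hv => by simp only [hv.imp, hv.and]; tauto)⟩,
    fun ⟨hφ, hψ⟩ => hΓ.mem_of_imp₂ hφ hψ
      (.of_valuation fun v hv => by simp only [hv.imp, hv.and]; tauto)⟩

theorem box_mem_of_derivableFrom {i : ℕ} {φ : Formula}
    (h : DerivableFrom {χ | Formula.box i χ ∈ Γ} φ) : Formula.box i φ ∈ Γ := by
  obtain ⟨l, hl, hd⟩ := h
  refine hΓ.mem_of_derivableFrom ⟨l.map (Formula.box i), by simpa using hl, ?_⟩
  refine ((Derivable.of_valuation fun v hv => ?_).mp (Derivable.conj_map_box_imp i l)).mp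
    (Derivable.box_mono i hd)
  simp only [hv.imp]
  tauto

theorem nabla_mem_of_box_imp {i d : ℕ} {φ ψ : Formula} (himp : Formula.box i (φ.imp ψ) ∈ Γ)
    (hψ : Formula.nabla i ψ d ∈ Γ) : Formula.nabla i φ d ∈ Γ :=
  hΓ.mem_of_imp₂ himp hψ (Derivable.distNsv i φ ψ d)

theorem nabla_mem_of_imp {i d : ℕ} {φ ψ : Formula} (hψ : Formula.nabla i ψ d ∈ Γ)
    (h : Derivable (φ.imp ψ)) : Formula.nabla i φ d ∈ Γ :=
  hΓ.mem_of_imp hψ (Derivable.nabla_anti i d h)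

theorem dia_mem_of_imp {i : ℕ} {φ ψ : Formula} (hφ : Formula.dia i φ ∈ Γ)
    (h : Derivable (φ.imp ψ)) : Formula.dia i ψ ∈ Γ :=
  hΓ.mem_of_imp hφ (Derivable.dia_mono i h)

theorem nabla_or_mem {i d : ℕ} {φ ψ : Formula} (hdia : Formula.dia i (φ.and ψ) ∈ Γ)
    (hφ : Formula.nabla i φ d ∈ Γ) (hψ : Formula.nabla i ψ d ∈ Γ) :
    Formula.nabla i (φ.or ψ) d ∈ Γ :=
  hΓ.mem_of_imp (hΓ.and_mem_iff.mpr ⟨hΓ.and_mem_iff.mpr ⟨hdia, hφ⟩, hψ⟩)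
    (Derivable.nsvOr i φ ψ d)

theorem nabla_or_self {i d : ℕ} {φ : Formula} (h : Formula.nabla i φ d ∈ Γ) :
    Formula.nabla i (φ.or φ) d ∈ Γ :=
  hΓ.nabla_mem_of_imp h (.of_valuation fun v hv => by simp only [hv.imp, hv.or]; tauto)

theorem nabla_or_comm {i d : ℕ} {φ ψ : Formula} (h : Formula.nabla i (φ.or ψ) d ∈ Γ) :
    Formula.nabla i (ψ.or φ) d ∈ Γ :=
  hΓ.nabla_mem_of_imp h (.of_valuation fun v hv => by simp only [hv.imp, hv.or]; tauto)

theorem nabla_or_trans {i d : ℕ} {φ ψ χ : Formula} (hψ : Formula.dia i ψ ∈ Γ)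
    (h₁ : Formula.nabla i (φ.or ψ) d ∈ Γ) (h₂ : Formula.nabla i (ψ.or χ) d ∈ Γ) :
    Formula.nabla i (φ.or χ) d ∈ Γ := by
  have hdia : Formula.dia i ((φ.or ψ).and (ψ.or χ)) ∈ Γ :=
    hΓ.dia_mem_of_imp hψ (.of_valuation fun v hv => by simp only [hv.imp, hv.or, hv.and]; tauto)
  exact hΓ.nabla_mem_of_imp (hΓ.nabla_or_mem hdia h₁ h₂)
    (.of_valuation fun v hv => by simp only [hv.imp, hv.or]; tauto)

end MCS

def nablaClass (Γ : Set Formula) (i d : ℕ) (φ : Formula) : Set Formula :=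
  {χ | (Formula.nabla i χ d).and (Formula.dia i χ) ∈ Γ ∧ Formula.nabla i (φ.or χ) d ∈ Γ}

-- Each `∇_i(·,d)`-class is named by the least code of its members.
open Classical in
noncomputable def canonicalG (Γ : Set Formula) (i : ℕ) (φ : Formula) (d : ℕ) : Option ℕ :=
  if (Formula.nabla i φ d).and (Formula.dia i φ) ∈ Γ then
    some (sInf (Formula.enc '' nablaClass Γ i d φ))
  else none

theorem canonicalG_ne_none_iff (Γ : Set Formula) (i : ℕ) (φ : Formula) (d : ℕ) :
    canonicalG Γ i φ d ≠ none ↔ (Formula.nabla i φ d).and (Formula.dia i φ) ∈ Γ := by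
  unfold canonicalG
  split_ifs <;> simp_all

section canonicalG

variable {Γ : Set Formula} (hΓ : MCS Γ) {i d : ℕ}
include hΓ

theorem nablaClass_subset {φ ψ : Formula} (hψ : (Formula.nabla i ψ d).and (Formula.dia i ψ) ∈ Γ)
    (h : Formula.nabla i (φ.or ψ) d ∈ Γ) : nablaClass Γ i d ψ ⊆ nablaClass Γ i d φ :=
  fun _ ⟨hχ, hψχ⟩ => ⟨hχ, hΓ.nabla_or_trans (hΓ.and_mem_iff.mp hψ).2 h hψχ⟩

theorem canonicalG_eq_iff {φ ψ : Formula}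
    (hφ : (Formula.nabla i φ d).and (Formula.dia i φ) ∈ Γ)
    (hψ : (Formula.nabla i ψ d).and (Formula.dia i ψ) ∈ Γ) :
    canonicalG Γ i φ d = canonicalG Γ i ψ d ↔ Formula.nabla i (φ.or ψ) d ∈ Γ := by
  simp only [canonicalG, if_pos hφ, if_pos hψ, Option.some.injEq]
  refine ⟨fun heq => ?_, fun h => ?_⟩
  · have hmem : ∀ φ, (Formula.nabla i φ d).and (Formula.dia i φ) ∈ Γ →
        sInf (Formula.enc '' nablaClass Γ i d φ) ∈ Formula.enc '' nablaClass Γ i d φ :=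
      fun φ hφ => Nat.sInf_mem ⟨_, φ, ⟨hφ, hΓ.nabla_or_self (hΓ.and_mem_iff.mp hφ).1⟩, rfl⟩
    obtain ⟨χ, ⟨hχ, hφχ⟩, hχenc⟩ := hmem φ hφ
    obtain ⟨χ', ⟨-, hψχ'⟩, hχ'enc⟩ := hmem ψ hψ
    obtain rfl : χ = χ' := Formula.enc_injective (by rw [hχenc, hχ'enc, heq])
    exact hΓ.nabla_or_trans (hΓ.and_mem_iff.mp hχ).2 hφχ (hΓ.nabla_or_comm hψχ')
  · rw [(nablaClass_subset hΓ hψ h).antisymm (nablaClass_subset hΓ hφ (hΓ.nabla_or_comm h))]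

end canonicalG

noncomputable def CWorld.ofMCS {Γ : Set Formula} (hΓ : MCS Γ) (f : ℕ → ℕ) : CWorld where
  Γ := Γ
  f := f
  g := canonicalG Γ
  mcs := hΓ
  cond1 := canonicalG_ne_none_iff Γ
  cond2 _ _ _ _ hφ hψ := canonicalG_eq_iff hΓ ((canonicalG_ne_none_iff _ _ _ _).mp hφ)
    ((canonicalG_ne_none_iff _ _ _ _).mp hψ)

namespace CWorld

variable (s : CWorld) {i d : ℕ} {Δ : Set Formula}

theorem dia_mem_of_mem (hΔ : MCS Δ) (hΘ : ∀ χ, Formula.box i χ ∈ s.Γ → χ ∈ Δ) {φ : Formula}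
    (hφ : φ ∈ Δ) : Formula.dia i φ ∈ s.Γ :=
  s.mcs.neg_mem_iff.mpr fun hbox => hΔ.neg_mem_iff.mp (hΘ _ hbox) hφ

theorem g_ne_none {φ : Formula} (hnabla : Formula.nabla i φ d ∈ s.Γ)
    (hdia : Formula.dia i φ ∈ s.Γ) : s.g i φ d ≠ none :=
  (s.cond1 i φ d).mpr (s.mcs.and_mem_iff.mpr ⟨hnabla, hdia⟩)

theorem g_eq_of_mem (hΔ : MCS Δ) (hΘ : ∀ χ, Formula.box i χ ∈ s.Γ → χ ∈ Δ) {φ ψ : Formula}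
    (hφ : Formula.nabla i φ d ∈ s.Γ) (hφΔ : φ ∈ Δ) (hψ : Formula.nabla i ψ d ∈ s.Γ)
    (hψΔ : ψ ∈ Δ) : s.g i φ d = s.g i ψ d :=
  (s.cond2 i φ ψ d (s.g_ne_none hφ (s.dia_mem_of_mem hΔ hΘ hφΔ))
    (s.g_ne_none hψ (s.dia_mem_of_mem hΔ hΘ hψΔ))).mpr
    (s.mcs.nabla_or_mem (s.dia_mem_of_mem hΔ hΘ (hΔ.and_mem_iff.mpr ⟨hφΔ, hψΔ⟩)) hφ hψ)

theorem exists_common_value (hΔ : MCS Δ) (hΘ : ∀ χ, Formula.box i χ ∈ s.Γ → χ ∈ Δ) (d : ℕ) :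
    ∃ n, ∀ φ, Formula.nabla i φ d ∈ s.Γ → φ ∈ Δ → s.g i φ d = some n := by
  by_cases h : ∃ φ₀, Formula.nabla i φ₀ d ∈ s.Γ ∧ φ₀ ∈ Δ
  · obtain ⟨φ₀, h₀, h₀Δ⟩ := h
    obtain ⟨n, hn⟩ := Option.ne_none_iff_exists'.mp
      (s.g_ne_none h₀ (s.dia_mem_of_mem hΔ hΘ h₀Δ))
    exact ⟨n, fun φ hφ hφΔ => (s.g_eq_of_mem hΔ hΘ hφ hφΔ h₀ h₀Δ).trans hn⟩
  · exact ⟨0, fun φ hφ hφΔ => absurd ⟨φ, hφ, hφΔ⟩ h⟩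

theorem exists_rel (hΔ : MCS Δ) (hΘ : ∀ χ, Formula.box i χ ∈ s.Γ → χ ∈ Δ) {n : ℕ}
    (hn : ∀ φ, Formula.nabla i φ d ∈ s.Γ → φ ∈ Δ → s.g i φ d = some n) :
    ∃ t : CWorld, t.Γ = Δ ∧ CRel i s t ∧ t.f d = n := by
  choose f hf using s.exists_common_value hΔ hΘ
  refine ⟨.ofMCS hΔ (Function.update f d n), rfl, ⟨hΘ, fun φ d' hφ hφΔ => ?_⟩, by simp [ofMCS]⟩
  rcases eq_or_ne d' d with rfl | hd
  · simpa [ofMCS] using hn φ hφ hφΔ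
  · simpa [ofMCS, Function.update_of_ne hd] using hf d' φ hφ hφΔ

theorem exists_rel_ne (hΔ : MCS Δ) (hΘ : ∀ χ, Formula.box i χ ∈ s.Γ → χ ∈ Δ) {v : ℕ}
    (hv : ∀ φ, Formula.nabla i φ d ∈ s.Γ → s.g i φ d = some v → φ.neg ∈ Δ) :
    ∃ t : CWorld, t.Γ = Δ ∧ CRel i s t ∧ t.f d ≠ v := by
  obtain ⟨n, hn⟩ := s.exists_common_value hΔ hΘ d
  obtain ⟨m, hmv, hm⟩ : ∃ m ≠ v, ∀ φ, Formula.nabla i φ d ∈ s.Γ → φ ∈ Δ → s.g i φ d = some m := by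
    rcases eq_or_ne n v with rfl | hnv
    · exact ⟨n + 1, by omega, fun φ hφ hφΔ =>
        absurd hφΔ (hΔ.neg_mem_iff.mp (hv φ hφ (hn φ hφ hφΔ)))⟩
    · exact ⟨n, hnv, hn⟩
  obtain ⟨t, htΓ, hR, hf⟩ := s.exists_rel hΔ hΘ hm
  exact ⟨t, htΓ, hR, hf ▸ hmv⟩

theorem nabla_disj_mem_and_g_eq {v : ℕ} : ∀ Φ : List Formula, Φ ≠ [] →
    (∀ φ ∈ Φ, Formula.nabla i φ d ∈ s.Γ ∧ s.g i φ d = some v) →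
    Formula.nabla i (Formula.disj Φ) d ∈ s.Γ ∧ s.g i (Formula.disj Φ) d = some v
  | [], hΦ, _ => absurd rfl hΦ
  | [φ], _, h => by simpa [Formula.disj] using h
  | φ :: χ :: Φ, _, h => by
    obtain ⟨hφ, hgφ⟩ := h φ List.mem_cons_self
    obtain ⟨hD, hgD⟩ := nabla_disj_mem_and_g_eq (χ :: Φ) (List.cons_ne_nil _ _)
      fun ψ hψ => h ψ (List.mem_cons_of_mem _ hψ)
    have hor : Formula.nabla i (φ.or (Formula.disj (χ :: Φ))) d ∈ s.Γ :=
      (s.cond2 i _ _ d (by simp [hgφ]) (by simp [hgD])).mp (hgφ.trans hgD.symm)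
    have hdia : Formula.dia i φ ∈ s.Γ :=
      (s.mcs.and_mem_iff.mp ((s.cond1 i φ d).mp (by simp [hgφ]))).2
    have hne : s.g i (φ.or (Formula.disj (χ :: Φ))) d ≠ none := s.g_ne_none hor
      (s.mcs.dia_mem_of_imp hdia (.of_valuation fun v hv => by simp only [hv.imp, hv.or]; tauto))
    refine ⟨hor, ?_⟩
    rw [Formula.disj, ← hgφ]
    refine (s.cond2 i _ φ d hne (by simp [hgφ])).mpr (s.mcs.nabla_mem_of_imp hor ?_)
    exact .of_valuation fun v hv => by simp only [hv.imp, hv.or]; tauto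

theorem nabla_disj_mem {v : ℕ} (Φ : List Formula)
    (h : ∀ φ ∈ Φ, Formula.nabla i φ d ∈ s.Γ ∧ s.g i φ d = some v) :
    Formula.nabla i (Formula.disj Φ) d ∈ s.Γ := by
  rcases eq_or_ne Φ [] with rfl | hΦ
  · exact s.mcs.mem_of_derivable (Derivable.nsvBot i d)
  · exact (s.nabla_disj_mem_and_g_eq Φ hΦ h).1

theorem consistent_insert_of_neg_nabla_mem {ψ : Formula}
    (h : (Formula.nabla i ψ d).neg ∈ s.Γ) (v : ℕ) :
    Consistent (insert ψ ({χ | Formula.box i χ ∈ s.Γ} ∪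
      Formula.neg '' {φ | Formula.nabla i φ d ∈ s.Γ ∧ s.g i φ d = some v})) := by
  by_contra hinc
  obtain ⟨Φ, hΦ, hder⟩ :=
    (DerivableFrom.neg_of_not_consistent_insert hinc).exists_or_disj_of_union_image_neg
  have hbox : Formula.box i (ψ.imp (Formula.disj Φ)) ∈ s.Γ := s.mcs.box_mem_of_derivableFrom
    (hder.mp (.of_valuation fun v hv => by simp only [hv.imp, hv.or, hv.neg]; tauto))
  exact s.mcs.neg_mem_iff.mp h (s.mcs.nabla_mem_of_box_imp hbox (s.nabla_disj_mem Φ hΦ))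

end CWorld

/-- existence lemma for ¬∇: if ¬∇_i(ψ,d) ∈ Γ_s then there are
canonical worlds t₁, t₂ with ψ ∈ Γ_{t₁}, ψ ∈ Γ_{t₂}, s R_i t₁, s R_i t₂ and
f_{t₁}(d) ≠ f_{t₂}(d). -/
theorem existence_lemma_nabla (s : CWorld) (i : ℕ) (ψ : Formula) (d : ℕ)
    (h : Formula.neg (Formula.nabla i ψ d) ∈ s.Γ) :
    ∃ t₁ t₂ : CWorld, ψ ∈ t₁.Γ ∧ ψ ∈ t₂.Γ ∧ CRel i s t₁ ∧ CRel i s t₂ ∧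
      t₁.f d ≠ t₂.f d := by
  have hcons := s.consistent_insert_of_neg_nabla_mem h
  obtain ⟨Δ₁, hsub₁, hΔ₁⟩ := exists_mcs_superset
    ((hcons 0).mono (Set.insert_subset_insert Set.subset_union_left))
  have hΘ₁ : ∀ χ, Formula.box i χ ∈ s.Γ → χ ∈ Δ₁ := fun χ hχ => hsub₁ (.inr hχ)
  obtain ⟨v, hv⟩ := s.exists_common_value hΔ₁ hΘ₁ d
  obtain ⟨t₁, rfl, hR₁, hf₁⟩ := s.exists_rel hΔ₁ hΘ₁ hv
  obtain ⟨Δ₂, hsub₂, hΔ₂⟩ := exists_mcs_superset (hcons v)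
  obtain ⟨t₂, rfl, hR₂, hf₂⟩ := s.exists_rel_ne hΔ₂ (fun χ hχ => hsub₂ (.inr (.inl hχ)))
    fun φ hφ hg => hsub₂ (.inr (.inr ⟨φ, ⟨hφ, hg⟩, rfl⟩))
  exact ⟨t₁, t₂, hsub₁ (.inl rfl), hsub₂ (.inl rfl), hR₁, hR₂, hf₁ ▸ hf₂.symm⟩
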